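/- MIN-CUT recurrence: Under the same setting as the MAX-CUT recurrence, with MINCUT_i and MINCUT_{i−1} defined as the minimum (instead of maximum) of cut(A, B) over the same families of constrained partitions, one has MINCUT_i(p, q, r, t) = (y − m)·(p·t + q·r) + min over natural numbers r₀ ≤ p, t₀ ≤ q with r₀ + t₀ = c of MINCUT_{i−1}(p − r₀, q − t₀, r₀ + r, t₀ + t). -/

import Mathlib

/-!
Every point of `Q + c • {m}` is `≤ m ≤ y`, so lowering an added copy of `y` to `m` shortens its
distance to each such point on the other side by exactly `y - m`; this accounts for the term
`(y - m) (p t + q r)`. A partition of `Q + c • {m}` is a partition of `Q` together with a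
split `r₀ + t₀ = c` of the copies of `m`, so the infimum over all partitions is the infimum over
the splits of the infima over partitions of `Q`.
-/

noncomputable def cut (A B : Multiset ℝ) : ℝ :=
  (A.map (fun a => (B.map (fun b => |a - b|)).sum)).sum

lemma cut_add_left (A A' B : Multiset ℝ) : cut (A + A') B = cut A B + cut A' B := by
  simp [cut]

lemma cut_add_right (A B B' : Multiset ℝ) : cut A (B + B') = cut A B + cut A B' := by
  simp [cut, Multiset.sum_map_add]

lemma cut_comm (A B : Multiset ℝ) : cut A B = cut B A := by
  rw [cut, cut, Multiset.sum_map_sum_map]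
  simp only [abs_sub_comm]

lemma cut_nonneg (A B : Multiset ℝ) : 0 ≤ cut A B :=
  Multiset.sum_nonneg fun _ hx => by
    obtain ⟨a, -, rfl⟩ := Multiset.mem_map.1 hx
    exact Multiset.sum_nonneg fun _ hz => by
      obtain ⟨b, -, rfl⟩ := Multiset.mem_map.1 hz
      exact abs_nonneg _

lemma cut_replicate_replicate (r t : ℕ) (x : ℝ) :
    cut (Multiset.replicate r x) (Multiset.replicate t x) = 0 := by
  simp [cut, Multiset.map_replicate]

lemma cut_replicate_right (A : Multiset ℝ) (n : ℕ) (x : ℝ) :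
    cut A (Multiset.replicate n x) = n * (A.map fun a => |a - x|).sum := by
  simp [cut, Multiset.map_replicate, Multiset.sum_map_mul_left]

lemma sum_abs_sub_of_le {A : Multiset ℝ} {m y : ℝ} (hA : ∀ a ∈ A, a ≤ m) (hmy : m ≤ y) :
    (A.map fun a => |a - y|).sum = (A.map fun a => |a - m|).sum + Multiset.card A * (y - m) := by
  have : ∀ a ∈ A, |a - y| = |a - m| + (y - m) := fun a ha => by
    rw [abs_of_nonpos (by linarith [hA a ha]), abs_of_nonpos (by linarith [hA a ha])]
    ring
  rw [Multiset.map_congr rfl this, Multiset.sum_map_add]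
  simp

lemma cut_replicate_right_of_le {A : Multiset ℝ} {m y : ℝ} (hA : ∀ a ∈ A, a ≤ m) (hmy : m ≤ y)
    (n : ℕ) :
    cut A (Multiset.replicate n y) =
      cut A (Multiset.replicate n m) + n * Multiset.card A * (y - m) := by
  rw [cut_replicate_right, cut_replicate_right, sum_abs_sub_of_le hA hmy]
  ring

lemma cut_add_replicate_of_le {A B : Multiset ℝ} {m y : ℝ} (hA : ∀ a ∈ A, a ≤ m)
    (hB : ∀ b ∈ B, b ≤ m) (hmy : m ≤ y) (r t : ℕ) :
    cut (A + Multiset.replicate r y) (B + Multiset.replicate t y) =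
      (y - m) * (Multiset.card A * t + Multiset.card B * r) +
        cut (A + Multiset.replicate r m) (B + Multiset.replicate t m) := by
  simp only [cut_add_left, cut_add_right, cut_replicate_replicate,
    cut_comm (Multiset.replicate r _) B, cut_replicate_right_of_le hA hmy,
    cut_replicate_right_of_le hB hmy]
  ring

lemma exists_eq_add_replicate_of_add_eq {α : Type*} {Q A₀ B₀ : Multiset α} {x : α} {c : ℕ}
    (h : A₀ + B₀ = Q + Multiset.replicate c x) :
    ∃ r₀ t₀ A₁ B₁, r₀ + t₀ = c ∧ A₀ = A₁ + Multiset.replicate r₀ x ∧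
      B₀ = B₁ + Multiset.replicate t₀ x ∧ A₁ + B₁ = Q := by
  classical
  have hcount : A₀.count x + B₀.count x = Q.count x + c := by
    simpa [Multiset.count_replicate] using congrArg (Multiset.count x) h
  obtain ⟨r₀, t₀, hr₀, ht₀, rfl⟩ : ∃ r₀ t₀, r₀ ≤ A₀.count x ∧ t₀ ≤ B₀.count x ∧ r₀ + t₀ = c :=
    ⟨min (A₀.count x) c, c - min (A₀.count x) c, by omega, by omega, by omega⟩
  obtain ⟨A₁, rfl⟩ := Multiset.le_iff_exists_add.1 (Multiset.le_count_iff_replicate_le.1 hr₀)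
  obtain ⟨B₁, rfl⟩ := Multiset.le_iff_exists_add.1 (Multiset.le_count_iff_replicate_le.1 ht₀)
  refine ⟨r₀, t₀, A₁, B₁, rfl, add_comm _ _, add_comm _ _,
    add_right_cancel (b := Multiset.replicate (r₀ + t₀) x) ?_⟩
  rw [← h, Multiset.replicate_add]
  abel

lemma csInf_biUnion {α ι : Type*} [ConditionallyCompleteLattice α] {I : Set ι}
    {F : ι → Set α} (hI : I.Nonempty) (hF : ∀ i ∈ I, (F i).Nonempty)
    (hbdd : BddBelow (⋃ i ∈ I, F i)) :
    sInf (⋃ i ∈ I, F i) = sInf ((fun i => sInf (F i)) '' I) := by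
  have hsub : ∀ i ∈ I, F i ⊆ ⋃ i ∈ I, F i := fun i hi => Set.subset_biUnion_of_mem hi
  have hle : ∀ i ∈ I, sInf (⋃ i ∈ I, F i) ≤ sInf (F i) := fun i hi =>
    csInf_le_csInf hbdd (hF i hi) (hsub i hi)
  have himg_bdd : BddBelow ((fun i => sInf (F i)) '' I) :=
    ⟨_, Set.forall_mem_image.2 hle⟩
  obtain ⟨i₀, hi₀⟩ := hI
  obtain ⟨v₀, hv₀⟩ := hF i₀ hi₀
  apply le_antisymm
  · exact le_csInf ⟨_, i₀, hi₀, rfl⟩ (Set.forall_mem_image.2 hle)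
  · refine le_csInf ⟨v₀, hsub i₀ hi₀ hv₀⟩ fun v hv => ?_
    obtain ⟨i, hi, hv⟩ := Set.mem_iUnion₂.1 hv
    exact (csInf_le himg_bdd ⟨i, hi, rfl⟩).trans (csInf_le (hbdd.mono (hsub i hi)) hv)

def partitionCuts (P : Multiset ℝ) (p q : ℕ) (A' B' : Multiset ℝ) : Set ℝ :=
  {v | ∃ A₀ B₀ : Multiset ℝ, A₀ + B₀ = P ∧ Multiset.card A₀ = p ∧ Multiset.card B₀ = q ∧
    v = cut (A₀ + A') (B₀ + B')}

lemma partitionCuts_nonempty {P : Multiset ℝ} {p q : ℕ} (h : p + q = Multiset.card P)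
    (A' B' : Multiset ℝ) : (partitionCuts P p q A' B').Nonempty := by
  refine ⟨_, (P.toList.take p : List ℝ), (P.toList.drop p : List ℝ), ?_, ?_, ?_, rfl⟩
  · rw [Multiset.coe_add, List.take_append_drop, Multiset.coe_toList]
  · simp only [Multiset.coe_card, List.length_take, Multiset.length_toList]; omega
  · simp only [Multiset.coe_card, List.length_drop, Multiset.length_toList]; omega

lemma partitionCuts_subset_Ici (P : Multiset ℝ) (p q : ℕ) (A' B' : Multiset ℝ) :
    partitionCuts P p q A' B' ⊆ Set.Ici 0 := by
  rintro _ ⟨A₀, B₀, -, -, -, rfl⟩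
  exact cut_nonneg _ _

lemma partitionCuts_replicate_of_le {P : Multiset ℝ} {m y : ℝ} (hP : ∀ z ∈ P, z ≤ m)
    (hmy : m ≤ y) (p q r t : ℕ) :
    partitionCuts P p q (Multiset.replicate r y) (Multiset.replicate t y) =
      (fun v => (y - m) * (p * t + q * r) + v) ''
        partitionCuts P p q (Multiset.replicate r m) (Multiset.replicate t m) := by
  have key : ∀ A₀ B₀, A₀ + B₀ = P →
      cut (A₀ + Multiset.replicate r y) (B₀ + Multiset.replicate t y) =
        (y - m) * (Multiset.card A₀ * t + Multiset.card B₀ * r) +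
          cut (A₀ + Multiset.replicate r m) (B₀ + Multiset.replicate t m) := by
    rintro A₀ B₀ rfl
    exact cut_add_replicate_of_le (fun a ha => hP a (Multiset.mem_add.2 (.inl ha)))
      (fun b hb => hP b (Multiset.mem_add.2 (.inr hb))) hmy r t
  ext v
  constructor
  · rintro ⟨A₀, B₀, hP, rfl, rfl, rfl⟩
    exact ⟨_, ⟨A₀, B₀, hP, rfl, rfl, rfl⟩, (key A₀ B₀ hP).symm⟩
  · rintro ⟨_, ⟨A₀, B₀, hP, rfl, rfl, rfl⟩, rfl⟩
    exact ⟨A₀, B₀, hP, rfl, rfl, (key A₀ B₀ hP).symm⟩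

lemma partitionCuts_add_replicate (Q : Multiset ℝ) (x : ℝ) (c p q : ℕ) (A' B' : Multiset ℝ) :
    partitionCuts (Q + Multiset.replicate c x) p q A' B' =
      ⋃ i ∈ {i : ℕ × ℕ | i.1 ≤ p ∧ i.2 ≤ q ∧ i.1 + i.2 = c},
        partitionCuts Q (p - i.1) (q - i.2)
          (Multiset.replicate i.1 x + A') (Multiset.replicate i.2 x + B') := by
  ext v
  simp only [Set.mem_iUnion, Set.mem_ofPred_eq, exists_prop, Prod.exists]
  constructor
  · rintro ⟨A₀, B₀, hAB, rfl, rfl, rfl⟩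
    obtain ⟨r₀, t₀, A₁, B₁, rfl, rfl, rfl, rfl⟩ := exists_eq_add_replicate_of_add_eq hAB
    refine ⟨r₀, t₀, ⟨by simp, by simp, rfl⟩, A₁, B₁, rfl, by simp, by simp, ?_⟩
    simp only [add_assoc]
  · rintro ⟨r₀, t₀, ⟨hr₀, ht₀, rfl⟩, A₁, B₁, rfl, hA₁, hB₁, rfl⟩
    refine ⟨A₁ + Multiset.replicate r₀ x, B₁ + Multiset.replicate t₀ x, ?_, ?_, ?_, ?_⟩
    · rw [add_add_add_comm, Multiset.replicate_add]
    · simp only [Multiset.card_add, Multiset.card_replicate]; omega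
    · simp only [Multiset.card_add, Multiset.card_replicate]; omega
    · simp only [add_assoc]

theorem mincut_recurrence (Q : Multiset ℝ) (m y : ℝ)
    (hQ : ∀ z ∈ Q, z ≤ m) (hmy : m ≤ y)
    (c p q r t : ℕ) (hpq : p + q = Multiset.card Q + c)
    (MINCUTi MINCUTprev : ℕ → ℕ → ℕ → ℕ → ℝ)
    (hMi : ∀ p' q' r' t', MINCUTi p' q' r' t' =
      sInf {v : ℝ | ∃ A₀ B₀ : Multiset ℝ,
        A₀ + B₀ = Q + Multiset.replicate c m ∧
        Multiset.card A₀ = p' ∧ Multiset.card B₀ = q' ∧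
        v = cut (A₀ + Multiset.replicate r' y) (B₀ + Multiset.replicate t' y)})
    (hMp : ∀ p' q' r' t', MINCUTprev p' q' r' t' =
      sInf {v : ℝ | ∃ A₀ B₀ : Multiset ℝ,
        A₀ + B₀ = Q ∧
        Multiset.card A₀ = p' ∧ Multiset.card B₀ = q' ∧
        v = cut (A₀ + Multiset.replicate r' m) (B₀ + Multiset.replicate t' m)}) :
    MINCUTi p q r t = (y - m) * ((p : ℝ) * t + (q : ℝ) * r) +
      sInf {v : ℝ | ∃ r₀ t₀ : ℕ, r₀ ≤ p ∧ t₀ ≤ q ∧ r₀ + t₀ = c ∧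
        v = MINCUTprev (p - r₀) (q - t₀) (r₀ + r) (t₀ + t)} := by
  set C : ℝ := (y - m) * (p * t + q * r)
  set I : Set (ℕ × ℕ) := {i | i.1 ≤ p ∧ i.2 ≤ q ∧ i.1 + i.2 = c}
  set F : ℕ × ℕ → Set ℝ := fun i => partitionCuts Q (p - i.1) (q - i.2)
    (Multiset.replicate (i.1 + r) m) (Multiset.replicate (i.2 + t) m)
  have hQm : ∀ z ∈ Q + Multiset.replicate c m, z ≤ m := fun z hz =>
    (Multiset.mem_add.1 hz).elim (hQ z) fun h => (Multiset.eq_of_mem_replicate h).le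
  have hI : I.Nonempty := ⟨(min p c, c - min p c), by omega, by omega, by omega⟩
  have hF : ∀ i ∈ I, (F i).Nonempty := fun i ⟨_, _, _⟩ => partitionCuts_nonempty (by omega) _ _
  have hne : (⋃ i ∈ I, F i).Nonempty :=
    Set.nonempty_biUnion.2 (hI.elim fun i hi => ⟨i, hi, hF i hi⟩)
  have hbdd : BddBelow (⋃ i ∈ I, F i) :=
    bddBelow_Ici.mono (Set.iUnion₂_subset fun i _ => partitionCuts_subset_Ici _ _ _ _ _)
  have hMprev : {v : ℝ | ∃ r₀ t₀ : ℕ, r₀ ≤ p ∧ t₀ ≤ q ∧ r₀ + t₀ = c ∧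
      v = MINCUTprev (p - r₀) (q - t₀) (r₀ + r) (t₀ + t)} = (fun i => sInf (F i)) '' I := by
    ext v
    simp [hMp, F, I, partitionCuts, eq_comm, and_assoc]
  calc MINCUTi p q r t
      = sInf (partitionCuts (Q + Multiset.replicate c m) p q
          (Multiset.replicate r y) (Multiset.replicate t y)) := hMi p q r t
    _ = sInf ((C + ·) '' ⋃ i ∈ I, F i) := by
      rw [partitionCuts_replicate_of_le hQm hmy, partitionCuts_add_replicate]
      simp only [C, I, F, Multiset.replicate_add]
    _ = C + sInf (⋃ i ∈ I, F i) := ((OrderIso.addLeft C).map_csInf' hne hbdd).symm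
    _ = C + sInf {v : ℝ | ∃ r₀ t₀ : ℕ, r₀ ≤ p ∧ t₀ ≤ q ∧ r₀ + t₀ = c ∧
          v = MINCUTprev (p - r₀) (q - t₀) (r₀ + r) (t₀ + t)} := by
      rw [csInf_biUnion hI hF hbdd, hMprev]
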